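/- Let A be a finite alphabet, Q ∈ P(A), and Ω ⊆ P(A). Then there exists a sequence {M_n} of subsets M_n ⊆ Aⁿ such that lim_{n→∞} Pⁿ(M_n) = 1 for every P ∈ Ω, and lim_{n→∞} (1/n) log Qⁿ(M_n) = −inf_{P∈Ω} H(P,Q). Moreover, every sequence {M̃_n} with lim_{n→∞} Pⁿ(M̃_n) = 1 for all P ∈ Ω satisfies liminf_{n→∞} (1/n) log Qⁿ(M̃_n) ≥ −inf_{P∈Ω} H(P,Q). -/

import Mathlib

/-! Method of types. If `x ∈ Aⁿ` has empirical distribution (type) `R`, then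
`Qⁿ(x) = 2^(-n D(R‖Q)) Rⁿ(x)`; since the type class of `R` has `Rⁿ`-mass at most one and there
are at most `(n+1)^|A|` types, a set of sequences whose types all satisfy `D(R‖Q) ≥ c` has
`Qⁿ`-mass at most `(n+1)^|A| 2^(-nc)`.

The optimal test accepts the sequences whose type is `δₙ`-close to some `P ∈ Ω` with `P ≪ Q`,
with `δₙ → 0` slowly enough that, by Chebyshev's inequality, it is typical for every such `P`;
continuity of `D(·‖Q)` then bounds its `Qⁿ`-mass by `2^(-n(inf D(P‖Q) - o(1)))`.
Conversely, for `P ≪ Q` every `P`-typical sequence has `Qⁿ(x) ≥ 2^(-n(D(P‖Q) + ε)) Pⁿ(x)`,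
and a set of `Pⁿ`-mass close to one contains at least half of the typical `Pⁿ`-mass.
-/

open Filter Finset

/-- Base-2 relative entropy (real-valued formula; meaningful when `P ≪ Q`). -/
noncomputable def klD {A : Type*} [Fintype A] (P Q : A → ℝ) : ℝ :=
  ∑ a, P a * (Real.logb 2 (P a) - Real.logb 2 (Q a))

/-- Base-2 relative entropy with value `⊤` when `P` is not absolutely continuous w.r.t. `Q`. -/
noncomputable def klDE {A : Type*} [Fintype A] (P Q : A → ℝ) : EReal :=
  if ∀ a, Q a = 0 → P a = 0 then ((klD P Q : ℝ) : EReal) else ⊤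

/-- ℓ¹ distance. -/
noncomputable def l1 {A : Type*} [Fintype A] (P Q : A → ℝ) : ℝ := ∑ a, |P a - Q a|

/-- Probability distribution on a finite set. -/
def IsProbDist {A : Type*} [Fintype A] (P : A → ℝ) : Prop := (∀ a, 0 ≤ P a) ∧ ∑ a, P a = 1

/-- Empirical distribution (type) of a sequence. -/
noncomputable def emp {A : Type*} [Fintype A] [DecidableEq A] {n : ℕ} (x : Fin n → A) : A → ℝ :=
  fun a => ((Finset.univ.filter fun i => x i = a).card : ℝ) / n

/-- Product (i.i.d.) measure of a set of sequences. -/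
noncomputable def prodP {A : Type*} [Fintype A] (Q : A → ℝ) {n : ℕ} (M : Set (Fin n → A)) : ℝ :=
  ∑ x : Fin n → A, Set.indicator M (fun y => ∏ i, Q (y i)) x

/-- Base-2 logarithm with value `⊥` at nonpositive reals. -/
noncomputable def elog2 (t : ℝ) : EReal := if t ≤ 0 then ⊥ else ((Real.logb 2 t : ℝ) : EReal)

section

variable {A : Type*} [Fintype A]

lemma IsProbDist.le_one {P : A → ℝ} (hP : IsProbDist P) (a : A) : P a ≤ 1 :=
  hP.2 ▸ single_le_sum (fun b _ ↦ hP.1 b) (mem_univ a)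

section prodP

variable {P : A → ℝ} {n : ℕ}

lemma sum_prod_apply_eq_pow (P : A → ℝ) (n : ℕ) :
    ∑ x : Fin n → A, ∏ i, P (x i) = (∑ a, P a) ^ n :=
  (Fintype.sum_pow P n).symm

lemma prodP_mono (hP : ∀ a, 0 ≤ P a) {M N : Set (Fin n → A)} (h : M ⊆ N) :
    prodP P M ≤ prodP P N :=
  sum_le_sum fun x _ ↦
    Set.indicator_le_indicator_of_subset h (fun y ↦ prod_nonneg fun i _ ↦ hP (y i)) x

lemma prodP_univ (hP : IsProbDist P) : prodP P (Set.univ : Set (Fin n → A)) = 1 := by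
  simp [prodP, sum_prod_apply_eq_pow, hP.2]

lemma prodP_compl (hP : IsProbDist P) (M : Set (Fin n → A)) :
    prodP P Mᶜ = 1 - prodP P M := by
  rw [← prodP_univ hP (n := n), eq_sub_iff_add_eq, prodP, prodP, prodP, ← sum_add_distrib]
  simp

lemma prodP_le_one (hP : IsProbDist P) (M : Set (Fin n → A)) : prodP P M ≤ 1 :=
  prodP_univ hP (n := n) ▸ prodP_mono hP.1 (Set.subset_univ M)

lemma prodP_iUnion_le {ι : Type*} [Fintype ι] (hP : ∀ a, 0 ≤ P a) (M : ι → Set (Fin n → A)) :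
    prodP P (⋃ j, M j) ≤ ∑ j, prodP P (M j) := by
  simp only [prodP]
  rw [sum_comm]
  refine sum_le_sum fun x _ ↦ ?_
  have hw : 0 ≤ ∏ i, P (x i) := prod_nonneg fun i _ ↦ hP (x i)
  by_cases hx : x ∈ ⋃ j, M j
  · obtain ⟨j, hj⟩ := Set.mem_iUnion.1 hx
    rw [Set.indicator_of_mem hx]
    exact (Set.indicator_of_mem hj _).symm.le.trans
      (single_le_sum (fun k _ ↦ Set.indicator_nonneg (fun _ _ ↦ hw) x) (mem_univ j))
  · rw [Set.indicator_of_notMem hx]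
    exact sum_nonneg fun k _ ↦ Set.indicator_nonneg (fun y _ ↦ prod_nonneg fun i _ ↦ hP (y i)) x

lemma prodP_union_le (hP : ∀ a, 0 ≤ P a) (M N : Set (Fin n → A)) :
    prodP P (M ∪ N) ≤ prodP P M + prodP P N := by
  simpa [Set.union_eq_iUnion, Fintype.sum_bool, add_comm] using
    prodP_iUnion_le hP fun b ↦ cond b M N

lemma prodP_setOf_forall_mem (S : Set A) :
    prodP P {x : Fin n → A | ∀ i, x i ∈ S} = (∑ a, S.indicator P a) ^ n := by
  rw [← sum_prod_apply_eq_pow, prodP]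
  refine sum_congr rfl fun x _ ↦ ?_
  by_cases hx : x ∈ {x : Fin n → A | ∀ i, x i ∈ S}
  · simp_all [Set.indicator_of_mem]
  · obtain ⟨i, hi⟩ := not_forall.1 hx
    rw [Set.indicator_of_notMem hx, prod_eq_zero (mem_univ i) (Set.indicator_of_notMem hi P)]

lemma mul_prodP_le_sum_mul (hP : ∀ a, 0 ≤ P a) {f : (Fin n → A) → ℝ} (hf : ∀ x, 0 ≤ f x)
    (c : ℝ) : c * prodP P {x | c ≤ f x} ≤ ∑ x, (∏ i, P (x i)) * f x := by
  rw [prodP, mul_sum]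
  refine sum_le_sum fun x _ ↦ ?_
  have hw : 0 ≤ ∏ i, P (x i) := prod_nonneg fun i _ ↦ hP (x i)
  by_cases hx : x ∈ {x | c ≤ f x}
  · rw [Set.indicator_of_mem hx, mul_comm]
    exact mul_le_mul_of_nonneg_left hx hw
  · rw [Set.indicator_of_notMem hx, mul_zero]
    exact mul_nonneg hw (hf x)

lemma tendsto_prodP_one_of_compl_le (hP : IsProbDist P) {M : (n : ℕ) → Set (Fin n → A)}
    {u : ℕ → ℝ} (hu : Tendsto u atTop (nhds 0)) (hM : ∀ᶠ n in atTop, prodP P (M n)ᶜ ≤ u n) :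
    Tendsto (fun n ↦ prodP P (M n)) atTop (nhds 1) := by
  refine tendsto_of_tendsto_of_tendsto_of_le_of_le' (by simpa using hu.const_sub 1)
    tendsto_const_nhds ?_ (.of_forall fun n ↦ prodP_le_one hP _)
  filter_upwards [hM] with n hn
  linarith [prodP_compl hP (M n)]

lemma tendsto_prodP_inter (hP : IsProbDist P) {M N : (n : ℕ) → Set (Fin n → A)}
    (hM : Tendsto (fun n ↦ prodP P (M n)) atTop (nhds 1))
    (hN : Tendsto (fun n ↦ prodP P (N n)) atTop (nhds 1)) :
    Tendsto (fun n ↦ prodP P (M n ∩ N n)) atTop (nhds 1) := by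
  have hu : Tendsto (fun n ↦ (1 - prodP P (M n)) + (1 - prodP P (N n))) atTop (nhds 0) := by
    simpa using (hM.const_sub 1).add (hN.const_sub 1)
  refine tendsto_prodP_one_of_compl_le hP hu (.of_forall fun n ↦ ?_)
  rw [Set.compl_inter, ← prodP_compl hP, ← prodP_compl hP]
  exact prodP_union_le hP.1 _ _

end prodP

section emp

variable [DecidableEq A] {n : ℕ}

lemma sum_apply_eq_mul_sum_emp (x : Fin n → A) (f : A → ℝ) :
    ∑ i, f (x i) = n * ∑ a, emp x a * f a := by
  rw [← sum_fiberwise' univ x f, mul_sum]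
  refine sum_congr rfl fun a _ ↦ ?_
  rcases eq_or_ne n 0 with rfl | hn
  · simp
  · simp only [sum_const, nsmul_eq_mul, emp]
    field_simp

lemma emp_nonneg (x : Fin n → A) (a : A) : 0 ≤ emp x a := by
  unfold emp; positivity

lemma emp_apply_pos (x : Fin n → A) (i : Fin n) : 0 < emp x (x i) := by
  have hn : (0 : ℝ) < n := by exact_mod_cast i.pos
  have : 0 < #{j | x j = x i} := card_pos.2 ⟨i, by simp⟩
  unfold emp; positivity

lemma sum_emp (hn : n ≠ 0) (x : Fin n → A) : ∑ a, emp x a = 1 := by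
  have h := sum_apply_eq_mul_sum_emp x 1
  simp only [Pi.one_apply, sum_const, card_univ, Fintype.card_fin, nsmul_eq_mul, mul_one] at h
  exact (mul_eq_left₀ (by exact_mod_cast hn)).1 h.symm

lemma isProbDist_emp (hn : n ≠ 0) (x : Fin n → A) : IsProbDist (emp x) :=
  ⟨emp_nonneg x, sum_emp hn x⟩

lemma card_image_emp_le (n : ℕ) :
    #(univ.image (emp : (Fin n → A) → A → ℝ)) ≤ (n + 1) ^ Fintype.card A := by
  have hsub : univ.image (emp : (Fin n → A) → A → ℝ) ⊆
      univ.image fun (c : A → Fin (n + 1)) a ↦ (c a : ℝ) / n := by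
    intro R hR
    obtain ⟨x, -, rfl⟩ := mem_image.1 hR
    refine mem_image.2 ⟨fun a ↦ ⟨#{i | x i = a}, Nat.lt_succ_of_le ?_⟩, mem_univ _, rfl⟩
    exact (card_filter_le _ _).trans (by simp)
  refine (card_le_card hsub).trans (card_image_le.trans ?_)
  simp

lemma sum_prod_emp_le (n : ℕ) :
    ∑ x : Fin n → A, ∏ i, emp x (x i) ≤ ((n : ℝ) + 1) ^ Fintype.card A := by
  rw [← sum_fiberwise_of_maps_to (fun x _ ↦ mem_image_of_mem emp (mem_univ x))]
  calc ∑ R ∈ univ.image emp, ∑ x with emp x = R, ∏ i, emp x (x i)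
      ≤ ∑ R ∈ univ.image (emp : (Fin n → A) → A → ℝ), (1 : ℝ) := by
        refine sum_le_sum fun R hR ↦ ?_
        obtain ⟨x₀, -, rfl⟩ := mem_image.1 hR
        calc ∑ x with emp x = emp x₀, ∏ i, emp x (x i)
            = ∑ x with emp x = emp x₀, ∏ i, emp x₀ (x i) :=
              sum_congr rfl fun x hx ↦ by rw [(mem_filter.1 hx).2]
          _ ≤ ∑ x : Fin n → A, ∏ i, emp x₀ (x i) :=
              sum_le_sum_of_subset_of_nonneg (filter_subset _ _)
                fun x _ _ ↦ prod_nonneg fun i _ ↦ emp_nonneg x₀ (x i)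
          _ ≤ 1 := by
              rw [sum_prod_apply_eq_pow]
              rcases eq_or_ne n 0 with rfl | hn
              · simp
              · simp [sum_emp hn]
    _ ≤ ((n : ℝ) + 1) ^ Fintype.card A := by
        simpa using (Nat.cast_le (α := ℝ)).2 (card_image_emp_le (A := A) n)

end emp

section weights

variable [DecidableEq A] {n : ℕ}

lemma prod_apply_eq_rpow {Q : A → ℝ} {x : Fin n → A} (hx : ∀ i, 0 < Q (x i)) :
    ∏ i, Q (x i) = 2 ^ (n * ∑ a, emp x a * Real.logb 2 (Q a)) := by
  rw [← sum_apply_eq_mul_sum_emp, Real.rpow_sum_of_pos two_pos]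
  exact prod_congr rfl fun i _ ↦ (Real.rpow_logb two_pos (by norm_num) (hx i)).symm

lemma prod_apply_eq_rpow_mul_prod_emp {Q : A → ℝ} {x : Fin n → A} (hx : ∀ i, 0 < Q (x i)) :
    ∏ i, Q (x i) = 2 ^ (-n * klD (emp x) Q) * ∏ i, emp x (x i) := by
  rw [prod_apply_eq_rpow hx, prod_apply_eq_rpow (emp_apply_pos x), ← Real.rpow_add two_pos]
  simp only [klD, mul_sub, sum_sub_distrib]
  congr 1
  ring

lemma prodP_le_of_le_klD_emp {Q : A → ℝ} (hQ : ∀ a, 0 ≤ Q a) {M : Set (Fin n → A)} {c : ℝ}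
    (hM : ∀ x ∈ M, (∀ i, 0 < Q (x i)) → c ≤ klD (emp x) Q) :
    prodP Q M ≤ ((n : ℝ) + 1) ^ Fintype.card A * 2 ^ (-n * c) := by
  have hterm : ∀ x, M.indicator (fun y ↦ ∏ i, Q (y i)) x ≤ 2 ^ (-n * c) * ∏ i, emp x (x i) := by
    intro x
    have hrhs : 0 ≤ (2 : ℝ) ^ (-n * c) * ∏ i, emp x (x i) :=
      mul_nonneg (by positivity) (prod_nonneg fun i _ ↦ emp_nonneg x (x i))
    by_cases hxM : x ∈ M
    · rw [Set.indicator_of_mem hxM]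
      by_cases hpos : ∀ i, 0 < Q (x i)
      · rw [prod_apply_eq_rpow_mul_prod_emp hpos]
        refine mul_le_mul_of_nonneg_right ?_ (prod_nonneg fun i _ ↦ emp_nonneg x (x i))
        refine Real.rpow_le_rpow_of_exponent_le one_le_two ?_
        nlinarith [hM x hxM hpos, n.cast_nonneg (α := ℝ)]
      · obtain ⟨i, hi⟩ := not_forall.1 hpos
        rwa [prod_eq_zero (mem_univ i) (le_antisymm (not_lt.1 hi) (hQ _))]
    · rwa [Set.indicator_of_notMem hxM]
  calc prodP Q M ≤ ∑ x : Fin n → A, 2 ^ (-n * c) * ∏ i, emp x (x i) := sum_le_sum fun x _ ↦ hterm x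
    _ ≤ ((n : ℝ) + 1) ^ Fintype.card A * 2 ^ (-n * c) := by
      rw [← mul_sum, mul_comm]
      gcongr
      exact sum_prod_emp_le n

end weights

section typical

variable {n : ℕ} {P : A → ℝ}

lemma sum_prod_mul_apply_mul_apply (hP : ∑ a, P a = 1) (i j : Fin n) (f g : A → ℝ) :
    ∑ x : Fin n → A, (∏ k, P (x k)) * (f (x i) * g (x j)) =
      if i = j then ∑ a, P a * (f a * g a) else (∑ a, P a * f a) * ∑ a, P a * g a := by
  set F : Fin n → A → ℝ := fun k b ↦ P b * ((if k = i then f b else 1) * if k = j then g b else 1)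
  have hF : ∀ x : Fin n → A, (∏ k, P (x k)) * (f (x i) * g (x j)) = ∏ k, F k (x k) := by
    intro x
    simp only [F, prod_mul_distrib, prod_ite_eq', mem_univ, if_true]
  simp_rw [hF, ← Fintype.prod_sum, F]
  split_ifs with hij
  · subst hij
    rw [Fintype.prod_eq_single i fun k hk ↦ by simp [hk, hP]]
    simp
  · rw [Fintype.prod_eq_mul i j hij fun k hk ↦ by simp [hk.1, hk.2, hP]]
    simp [hij, Ne.symm hij]

lemma sum_prod_mul_sum_sq (hP : ∑ a, P a = 1) {h : A → ℝ} (h0 : ∑ a, P a * h a = 0) :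
    ∑ x : Fin n → A, (∏ k, P (x k)) * (∑ i, h (x i)) ^ 2 = n * ∑ a, P a * h a ^ 2 := by
  simp_rw [sq, sum_mul_sum, mul_sum]
  rw [sum_comm]
  refine (sum_congr rfl fun i _ ↦ sum_comm).trans ?_
  simp [sum_prod_mul_apply_mul_apply hP, h0, mul_sum]

variable [DecidableEq A]

def typicalSet (P : A → ℝ) (δ : ℝ) (n : ℕ) : Set (Fin n → A) :=
  {x | ∀ a, |emp x a - P a| ≤ δ}

lemma prodP_lt_abs_emp_sub_le (hP : IsProbDist P) (hn : n ≠ 0) {δ : ℝ} (hδ : 0 < δ) (a : A) :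
    prodP P {x : Fin n → A | δ < |emp x a - P a|} ≤ 1 / (n * δ ^ 2) := by
  set h : A → ℝ := fun b ↦ (if b = a then 1 else 0) - P a
  have hsum : ∀ x : Fin n → A, ∑ i, h (x i) = n * (emp x a - P a) := fun x ↦ by
    simp [sum_apply_eq_mul_sum_emp x h, h, mul_sub, sum_sub_distrib, ← sum_mul, sum_emp hn]
  have hmean : ∑ b, P b * h b = 0 := by
    simp [h, mul_sub, sum_sub_distrib, ← sum_mul, hP.2]
  have hvar : ∑ b, P b * h b ^ 2 ≤ 1 := by
    refine (sum_le_sum fun b _ ↦ mul_le_of_le_one_right (hP.1 b) ?_).trans hP.2.le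
    have := hP.1 a
    have := hP.le_one a
    rw [sq_le_one_iff_abs_le_one, abs_le]
    constructor <;> simp only [h] <;> split_ifs <;> linarith
  have hsub : {x : Fin n → A | δ < |emp x a - P a|} ⊆
      {x | (n * δ) ^ 2 ≤ (∑ i, h (x i)) ^ 2} := fun x hx ↦ by
    rw [Set.mem_ofPred_eq, hsum, mul_pow, mul_pow, ← sq_abs (emp x a - P a)]
    gcongr
    exact hx.le
  have hnδ : 0 < ((n : ℝ) * δ) ^ 2 := by have := Nat.pos_of_ne_zero hn; positivity
  calc prodP P {x : Fin n → A | δ < |emp x a - P a|}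
      ≤ prodP P {x | (n * δ) ^ 2 ≤ (∑ i, h (x i)) ^ 2} := prodP_mono hP.1 hsub
    _ ≤ (∑ x : Fin n → A, (∏ k, P (x k)) * (∑ i, h (x i)) ^ 2) / (n * δ) ^ 2 := by
        rw [le_div_iff₀ hnδ, mul_comm]
        exact mul_prodP_le_sum_mul hP.1 (fun x ↦ sq_nonneg _) _
    _ ≤ n * 1 / (n * δ) ^ 2 := by
        rw [sum_prod_mul_sum_sq hP.2 hmean]
        gcongr
    _ = 1 / (n * δ ^ 2) := by
        field_simp

lemma prodP_typicalSet_compl_le (hP : IsProbDist P) (hn : n ≠ 0) {δ : ℝ} (hδ : 0 < δ) :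
    prodP P (typicalSet P δ n)ᶜ ≤ Fintype.card A / (n * δ ^ 2) := by
  have hcompl : (typicalSet P δ n)ᶜ = ⋃ a, {x : Fin n → A | δ < |emp x a - P a|} := by
    ext x
    simp [typicalSet]
  rw [hcompl]
  refine (prodP_iUnion_le hP.1 _).trans ?_
  refine (sum_le_sum fun a _ ↦ prodP_lt_abs_emp_sub_le hP hn hδ a).trans_eq ?_
  simp only [sum_const, card_univ, nsmul_eq_mul]
  ring

lemma tendsto_prodP_typicalSet (hP : IsProbDist P) {δ : ℕ → ℝ} (hδ : ∀ᶠ n in atTop, 0 < δ n)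
    (hnδ : Tendsto (fun n : ℕ ↦ n * δ n ^ 2) atTop atTop) :
    Tendsto (fun n ↦ prodP P (typicalSet P (δ n) n)) atTop (nhds 1) := by
  refine tendsto_prodP_one_of_compl_le hP
    ((tendsto_const_nhds (x := (Fintype.card A : ℝ))).div_atTop hnδ) ?_
  filter_upwards [hδ, eventually_ne_atTop 0] with n hδn hn
  exact prodP_typicalSet_compl_le hP hn hδn

end typical

section rate

lemma elog2_of_pos {t : ℝ} (ht : 0 < t) : elog2 t = (Real.logb 2 t : EReal) :=
  if_neg ht.not_ge

lemma elog2_mono : Monotone elog2 := by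
  intro s t hst
  by_cases hs : s ≤ 0
  · simp [elog2, hs]
  · rw [elog2_of_pos (not_le.1 hs), elog2_of_pos (by linarith), EReal.coe_le_coe_iff]
    exact Real.logb_le_logb_of_le one_lt_two (not_le.1 hs) hst

lemma elog2_mul_inv_le {t B : ℝ} (hB : 0 < B) (htB : t ≤ B) (n : ℕ) :
    elog2 t * (((n : ℝ)⁻¹ : ℝ) : EReal) ≤ ((Real.logb 2 B * (n : ℝ)⁻¹ : ℝ) : EReal) := by
  rw [EReal.coe_mul, ← elog2_of_pos hB]
  exact mul_le_mul_of_nonneg_right (elog2_mono htB) (by exact_mod_cast inv_nonneg.2 n.cast_nonneg)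

lemma le_elog2_mul_inv {t b : ℝ} (hb : 0 < b) (hbt : b ≤ t) (n : ℕ) :
    ((Real.logb 2 b * (n : ℝ)⁻¹ : ℝ) : EReal) ≤ elog2 t * (((n : ℝ)⁻¹ : ℝ) : EReal) := by
  rw [EReal.coe_mul, ← elog2_of_pos hb]
  exact mul_le_mul_of_nonneg_right (elog2_mono hbt) (by exact_mod_cast inv_nonneg.2 n.cast_nonneg)

end rate

section lowerBound

variable [DecidableEq A] {n : ℕ} {P Q : A → ℝ}

lemma rpow_mul_prod_le_prod_of_mem_typicalSet (hQ : ∀ a, 0 ≤ Q a)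
    (hPQ : ∀ a, Q a = 0 → P a = 0) {δ : ℝ} {x : Fin n → A} (hx : x ∈ typicalSet P δ n)
    (hxP : ∀ i, 0 < P (x i)) :
    2 ^ (-n * (klD P Q + δ * ∑ a, |Real.logb 2 (Q a) - Real.logb 2 (P a)|)) * ∏ i, P (x i) ≤
      ∏ i, Q (x i) := by
  have hxQ : ∀ i, 0 < Q (x i) := fun i ↦
    (hQ _).lt_of_ne fun h ↦ (hxP i).ne' (hPQ _ h.symm)
  set g : A → ℝ := fun a ↦ Real.logb 2 (Q a) - Real.logb 2 (P a)
  have hsplit : ∑ a, emp x a * Real.logb 2 (Q a) = ∑ a, emp x a * Real.logb 2 (P a) +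
      (-klD P Q + ∑ a, (emp x a - P a) * g a) := by
    simp only [klD, g, ← sum_neg_distrib, ← sum_add_distrib]
    exact sum_congr rfl fun a _ ↦ by ring
  have hdev : -(δ * ∑ a, |g a|) ≤ ∑ a, (emp x a - P a) * g a := by
    refine neg_le_of_abs_le ((abs_sum_le_sum_abs _ _).trans ?_)
    rw [mul_sum]
    exact sum_le_sum fun a _ ↦ by rw [abs_mul]; gcongr; exact hx a
  rw [prod_apply_eq_rpow hxQ, prod_apply_eq_rpow hxP, ← Real.rpow_add two_pos, hsplit]
  refine Real.rpow_le_rpow_of_exponent_le one_le_two ?_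
  nlinarith [n.cast_nonneg (α := ℝ)]

lemma rpow_mul_prodP_inter_typicalSet_le (hQ : ∀ a, 0 ≤ Q a) (hP : ∀ a, 0 ≤ P a)
    (hPQ : ∀ a, Q a = 0 → P a = 0) (δ : ℝ) (M : Set (Fin n → A)) :
    2 ^ (-n * (klD P Q + δ * ∑ a, |Real.logb 2 (Q a) - Real.logb 2 (P a)|)) *
      prodP P (M ∩ typicalSet P δ n) ≤ prodP Q M := by
  rw [prodP, prodP, mul_sum]
  refine sum_le_sum fun x _ ↦ ?_
  by_cases hx : x ∈ M ∩ typicalSet P δ n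
  · rw [Set.indicator_of_mem hx, Set.indicator_of_mem hx.1]
    by_cases hxP : ∀ i, 0 < P (x i)
    · exact rpow_mul_prod_le_prod_of_mem_typicalSet hQ hPQ hx.2 hxP
    · obtain ⟨i, hi⟩ := not_forall.1 hxP
      rw [prod_eq_zero (mem_univ i) (le_antisymm (not_lt.1 hi) (hP _)), mul_zero]
      exact prod_nonneg fun i _ ↦ hQ _
  · rw [Set.indicator_of_notMem hx, mul_zero]
    exact Set.indicator_nonneg (fun y _ ↦ prod_nonneg fun i _ ↦ hQ _) x

lemma le_liminf_elog2_prodP (hQ : ∀ a, 0 ≤ Q a) (hP : IsProbDist P)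
    (hPQ : ∀ a, Q a = 0 → P a = 0) {M : (n : ℕ) → Set (Fin n → A)}
    (hM : Tendsto (fun n ↦ prodP P (M n)) atTop (nhds 1)) :
    ((-klD P Q : ℝ) : EReal) ≤
      liminf (fun n : ℕ ↦ elog2 (prodP Q (M n)) * (((n : ℝ)⁻¹ : ℝ) : EReal)) atTop := by
  refine EReal.ge_of_forall_gt_iff_ge.1 fun z hz ↦ ?_
  rw [EReal.coe_lt_coe_iff] at hz
  set C := ∑ a, |Real.logb 2 (Q a) - Real.logb 2 (P a)|
  have hC : 0 ≤ C := sum_nonneg fun a _ ↦ abs_nonneg _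
  set δ := (-klD P Q - z) / (2 * (C + 1))
  have hδ : 0 < δ := div_pos (by linarith) (by positivity)
  have hδC : δ * C ≤ (-klD P Q - z) / 2 := by
    rw [div_mul_eq_mul_div, div_le_div_iff₀ (by positivity) two_pos]
    nlinarith
  have hMT : Tendsto (fun n ↦ prodP P (M n ∩ typicalSet P δ n)) atTop (nhds 1) :=
    tendsto_prodP_inter hP hM <| tendsto_prodP_typicalSet hP (.of_forall fun _ ↦ hδ) <|
      tendsto_natCast_atTop_atTop.atTop_mul_const (by positivity)
  refine le_liminf_of_le (by isBoundedDefault) ?_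
  filter_upwards [hMT.eventually_const_le (by norm_num : (1 / 2 : ℝ) < 1),
    (tendsto_inv_atTop_nhds_zero_nat (𝕜 := ℝ)).eventually_le_const
      (by linarith : 0 < (-klD P Q - z) / 2),
    eventually_ne_atTop 0] with n hhalf hinv hn
  set s : ℝ := -n * (klD P Q + δ * C)
  have hlow : (2 : ℝ) ^ (s - 1) ≤ prodP Q (M n) :=
    calc (2 : ℝ) ^ (s - 1) = 2 ^ s * (1 / 2) := by rw [Real.rpow_sub two_pos, Real.rpow_one]; ring
      _ ≤ 2 ^ s * prodP P (M n ∩ typicalSet P δ n) := by gcongr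
      _ ≤ prodP Q (M n) := rpow_mul_prodP_inter_typicalSet_le hQ hP.1 hPQ δ (M n)
  refine le_trans ?_ (le_elog2_mul_inv (by positivity) hlow n)
  rw [Real.logb_rpow two_pos (by norm_num), EReal.coe_le_coe_iff]
  have : (s - 1) * (n : ℝ)⁻¹ = -(klD P Q + δ * C) - (n : ℝ)⁻¹ := by
    field_simp
    ring
  linarith

lemma neg_sInf_klDE_le_liminf (hQ : ∀ a, 0 ≤ Q a) {Ω : Set (A → ℝ)}
    (hΩ : ∀ P ∈ Ω, IsProbDist P) {M : (n : ℕ) → Set (Fin n → A)}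
    (hM : ∀ P ∈ Ω, Tendsto (fun n ↦ prodP P (M n)) atTop (nhds 1)) :
    -sInf ((fun P ↦ klDE P Q) '' Ω) ≤
      liminf (fun n : ℕ ↦ elog2 (prodP Q (M n)) * (((n : ℝ)⁻¹ : ℝ) : EReal)) atTop := by
  rw [EReal.neg_le]
  refine le_sInf ?_
  rintro _ ⟨P, hPΩ, rfl⟩
  dsimp only [klDE]
  split_ifs with hPQ
  · rw [EReal.neg_le, ← EReal.coe_neg]
    exact le_liminf_elog2_prodP hQ (hΩ P hPΩ) hPQ (hM P hPΩ)
  · exact le_top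

end lowerBound

section upperBound

lemma continuous_klD_left (Q : A → ℝ) : Continuous fun R : A → ℝ ↦ klD R Q := by
  simp_rw [klD, mul_sub, Real.logb, mul_div_assoc']
  exact continuous_finsetSum _ fun a _ ↦
    ((Real.continuous_mul_log.comp (continuous_apply a)).div_const _).sub
      (((continuous_apply a).mul continuous_const).div_const _)

lemma exists_pos_forall_klD_le_add (Q : A → ℝ) {ε : ℝ} (hε : 0 < ε) :
    ∃ η > 0, ∀ R P : A → ℝ, IsProbDist R → IsProbDist P →
      (∀ a, |R a - P a| ≤ η) → klD P Q ≤ klD R Q + ε := by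
  set K : Set (A → ℝ) := Set.univ.pi fun _ ↦ Set.Icc 0 1
  have hK : ∀ P, IsProbDist P → P ∈ K := fun P hP a _ ↦ ⟨hP.1 a, hP.le_one a⟩
  obtain ⟨η, hη, h⟩ := Metric.uniformContinuousOn_iff.1
    ((isCompact_univ_pi fun _ ↦ isCompact_Icc).uniformContinuousOn_of_continuous
      (continuous_klD_left Q).continuousOn) ε hε
  refine ⟨η / 2, half_pos hη, fun R P hR hP hRP ↦ ?_⟩
  have hdist : dist R P < η :=
    ((dist_pi_le_iff (half_pos hη).le).2 fun a ↦ (Real.dist_eq _ _).trans_le (hRP a)).trans_lt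
      (half_lt_self hη)
  linarith [abs_lt.1 (Real.dist_eq _ _ ▸ h R (hK R hR) P (hK P hP) hdist)]

lemma tendsto_logb_mul_inv (k : ℕ) (c : ℝ) :
    Tendsto (fun n : ℕ ↦ Real.logb 2 (((n : ℝ) + 1) ^ k * 2 ^ (-n * c)) * (n : ℝ)⁻¹) atTop
      (nhds (-c)) := by
  have hlog : Tendsto (fun n : ℕ ↦ Real.logb 2 ((n : ℝ) + 1) / n) atTop (nhds 0) := by
    have := (Real.tendsto_pow_logb_div_mul_add_atTop (b := 2) 1 (-1) 1 one_ne_zero).comp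
      (tendsto_atTop_add_const_right atTop 1 tendsto_natCast_atTop_atTop)
    refine this.congr fun n ↦ ?_
    simp
  have := (hlog.const_mul (k : ℝ)).sub_const c
  rw [mul_zero, zero_sub] at this
  refine this.congr' ?_
  filter_upwards [eventually_ne_atTop 0] with n hn
  rw [Real.logb_mul (by positivity) (by positivity), Real.logb_pow,
    Real.logb_rpow two_pos (by norm_num)]
  field_simp
  ring

variable [DecidableEq A]

/-- Sequences through a `Q`-null letter cost nothing under `Qⁿ`; they make the test typical
also for the `P ∈ Ω` that are not absolutely continuous with respect to `Q`. -/
def acceptanceSet (Q : A → ℝ) (Ω : Set (A → ℝ)) (δ : ℝ) (n : ℕ) : Set (Fin n → A) :=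
  {x | (∃ i, Q (x i) = 0) ∨ ∃ P ∈ Ω, (∀ a, Q a = 0 → P a = 0) ∧ x ∈ typicalSet P δ n}

variable {Q : A → ℝ} {Ω : Set (A → ℝ)}

lemma tendsto_prodP_acceptanceSet {P : A → ℝ} (hP : IsProbDist P) (hPΩ : P ∈ Ω)
    {δ : ℕ → ℝ} (hδ : ∀ᶠ n in atTop, 0 < δ n)
    (hnδ : Tendsto (fun n : ℕ ↦ n * δ n ^ 2) atTop atTop) :
    Tendsto (fun n ↦ prodP P (acceptanceSet Q Ω (δ n) n)) atTop (nhds 1) := by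
  by_cases hPQ : ∀ a, Q a = 0 → P a = 0
  · exact tendsto_of_tendsto_of_tendsto_of_le_of_le (tendsto_prodP_typicalSet hP hδ hnδ)
      tendsto_const_nhds (fun n ↦ prodP_mono hP.1 fun x hx ↦ Or.inr ⟨P, hPΩ, hPQ, hx⟩)
      (fun n ↦ prodP_le_one hP _)
  obtain ⟨a₀, hQa₀, hPa₀⟩ : ∃ a, Q a = 0 ∧ P a ≠ 0 := by simpa using hPQ
  have hsum : ∑ a, ({a₀}ᶜ : Set A).indicator P a = 1 - P a₀ := by
    simp [Set.indicator_compl, sum_sub_distrib, hP.2]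
  refine tendsto_prodP_one_of_compl_le hP (u := fun n ↦ (1 - P a₀) ^ n)
    (tendsto_pow_atTop_nhds_zero_of_lt_one (by linarith [hP.le_one a₀])
      (by linarith [(hP.1 a₀).lt_of_ne' hPa₀])) (.of_forall fun n ↦ ?_)
  rw [← hsum, ← prodP_setOf_forall_mem]
  refine prodP_mono hP.1 fun x hx i hi ↦ hx (Or.inl ⟨i, ?_⟩)
  rwa [Set.mem_singleton_iff.1 hi]

lemma limsup_elog2_prodP_acceptanceSet_le (hQ : ∀ a, 0 ≤ Q a) (hΩ : ∀ P ∈ Ω, IsProbDist P)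
    {δ : ℕ → ℝ} (hδ : Tendsto δ atTop (nhds 0)) :
    limsup (fun n : ℕ ↦ elog2 (prodP Q (acceptanceSet Q Ω (δ n) n)) *
      (((n : ℝ)⁻¹ : ℝ) : EReal)) atTop ≤ -sInf ((fun P ↦ klDE P Q) '' Ω) := by
  rw [EReal.le_neg]
  refine EReal.ge_of_forall_gt_iff_ge.1 fun c hc ↦ ?_
  obtain ⟨c', hcc', hc'⟩ := EReal.lt_iff_exists_real_btwn.1 hc
  rw [EReal.coe_lt_coe_iff] at hcc'
  obtain ⟨η, hη, hcont⟩ := exists_pos_forall_klD_le_add Q (sub_pos.2 hcc')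
  have hklD : ∀ᶠ n in atTop, ∀ x ∈ acceptanceSet Q Ω (δ n) n,
      (∀ i, 0 < Q (x i)) → c ≤ klD (emp x) Q := by
    filter_upwards [hδ.eventually_le_const hη, eventually_ne_atTop 0] with n hδn hn
    rintro x (⟨i, hi⟩ | ⟨P, hPΩ, hPQ, hx⟩) hxQ
    · exact absurd hi (hxQ i).ne'
    · have hc'P : c' < klD P Q := by
        have h := hc'.trans_le (sInf_le ⟨P, hPΩ, rfl⟩)
        simpa only [klDE, if_pos hPQ, EReal.coe_lt_coe_iff] using h
      linarith [hcont (emp x) P (isProbDist_emp hn x) (hΩ P hPΩ) fun a ↦ (hx a).trans hδn]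
  rw [EReal.le_neg, ← EReal.coe_neg]
  calc limsup (fun n : ℕ ↦ elog2 (prodP Q (acceptanceSet Q Ω (δ n) n)) *
        (((n : ℝ)⁻¹ : ℝ) : EReal)) atTop
      ≤ limsup (fun n : ℕ ↦ ((Real.logb 2 (((n : ℝ) + 1) ^ Fintype.card A * 2 ^ (-n * c)) *
          (n : ℝ)⁻¹ : ℝ) : EReal)) atTop :=
        limsup_le_limsup <| hklD.mono fun n hn ↦
          elog2_mul_inv_le (by positivity) (prodP_le_of_le_klD_emp hQ hn) n
    _ = ((-c : ℝ) : EReal) := (EReal.tendsto_coe.2 (tendsto_logb_mul_inv _ c)).limsup_eq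

end upperBound

end

lemma tendsto_natCast_mul_rpow_sq :
    Tendsto (fun n : ℕ ↦ (n : ℝ) * ((n : ℝ) ^ (-(1 / 4 : ℝ))) ^ 2) atTop atTop := by
  refine ((tendsto_rpow_atTop (by norm_num : (0 : ℝ) < 1 / 2)).comp
    tendsto_natCast_atTop_atTop).congr' ?_
  filter_upwards [eventually_ne_atTop 0] with n hn
  have hpos : (0 : ℝ) < n := by positivity
  calc (n : ℝ) ^ (1 / 2 : ℝ) = n ^ ((1 : ℝ) + -(1 / 4) * 2) := by norm_num
    _ = n * (n ^ (-(1 / 4 : ℝ))) ^ 2 := by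
      rw [Real.rpow_add hpos, Real.rpow_one, Real.rpow_mul hpos.le]
      norm_cast

theorem sanov_theorem_general {A : Type*} [Fintype A] (Q : A → ℝ)
    (hQ : IsProbDist Q) (Ω : Set (A → ℝ)) (hΩ : ∀ P ∈ Ω, IsProbDist P) :
    (∃ M : (n : ℕ) → Set (Fin n → A),
      (∀ P ∈ Ω, Tendsto (fun n : ℕ => prodP P (M n)) atTop (nhds 1)) ∧
      Tendsto (fun n : ℕ => elog2 (prodP Q (M n)) * (((n : ℝ)⁻¹ : ℝ) : EReal)) atTop
        (nhds (-(sInf ((fun P => klDE P Q) '' Ω))))) ∧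
    ∀ M : (n : ℕ) → Set (Fin n → A),
      (∀ P ∈ Ω, Tendsto (fun n : ℕ => prodP P (M n)) atTop (nhds 1)) →
      -(sInf ((fun P => klDE P Q) '' Ω)) ≤
        Filter.liminf (fun n : ℕ => elog2 (prodP Q (M n)) * (((n : ℝ)⁻¹ : ℝ) : EReal)) atTop := by
  classical
  -- `δₙ → 0` while `n δₙ² → ∞`, as the Chebyshev bound on the typical sets requires.
  set δ : ℕ → ℝ := fun n ↦ (n : ℝ) ^ (-(1 / 4 : ℝ))
  have hδ : Tendsto δ atTop (nhds 0) :=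
    (tendsto_rpow_neg_atTop (by norm_num)).comp tendsto_natCast_atTop_atTop
  have hδpos : ∀ᶠ n in atTop, 0 < δ n :=
    (eventually_ne_atTop 0).mono fun n hn ↦ Real.rpow_pos_of_pos (by positivity) _
  have hM : ∀ P ∈ Ω, Tendsto (fun n ↦ prodP P (acceptanceSet Q Ω (δ n) n)) atTop (nhds 1) :=
    fun P hP ↦ tendsto_prodP_acceptanceSet (hΩ P hP) hP hδpos tendsto_natCast_mul_rpow_sq
  exact ⟨⟨_, hM, tendsto_of_le_liminf_of_limsup_le (neg_sInf_klDE_le_liminf hQ.1 hΩ hM)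
    (limsup_elog2_prodP_acceptanceSet_le hQ.1 hΩ hδ)⟩,
    fun M hM ↦ neg_sInf_klDE_le_liminf hQ.1 hΩ hM⟩

/-- Sanov's theorem, hypothesis-testing form: there exist sets `Mₙ ⊆ Aⁿ` typical for every
`P ∈ Ω` with `(1/n) log Qⁿ(Mₙ) → −inf_{P∈Ω} H(P,Q)` (in `EReal`; the limit is `⊥` when the
infimum is `∞`), and this separation rate is optimal. -/
theorem sanov_theorem {A : Type*} [Fintype A] [DecidableEq A] (Q : A → ℝ)
    (hQ : IsProbDist Q) (Ω : Set (A → ℝ)) (hΩ : ∀ P ∈ Ω, IsProbDist P) :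
    (∃ M : (n : ℕ) → Set (Fin n → A),
      (∀ P ∈ Ω, Tendsto (fun n : ℕ => prodP P (M n)) atTop (nhds 1)) ∧
      Tendsto (fun n : ℕ => elog2 (prodP Q (M n)) * (((n : ℝ)⁻¹ : ℝ) : EReal)) atTop
        (nhds (-(sInf ((fun P => klDE P Q) '' Ω))))) ∧
    ∀ M : (n : ℕ) → Set (Fin n → A),
      (∀ P ∈ Ω, Tendsto (fun n : ℕ => prodP P (M n)) atTop (nhds 1)) →
      -(sInf ((fun P => klDE P Q) '' Ω)) ≤
        Filter.liminf (fun n : ℕ => elog2 (prodP Q (M n)) * (((n : ℝ)⁻¹ : ℝ) : EReal)) atTop :=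
  sanov_theorem_general Q hQ Ω hΩ
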